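/- Let H be a complex Hilbert space, f : ℕ → H a frame for H with frame operator S, and Λ ⊆ ℕ a finite set. Then {S⁻¹(f i) : i ∉ Λ} is a frame for H if and only if the continuous linear operator V : H → H defined by V x = x − ∑_{i∈Λ} ⟨x, f i⟩ · S⁻¹(f i) is bijective. -/

import Mathlib

set_option maxHeartbeats 1000000

open scoped ComplexInnerProductSpace


variable {H : Type*} [NormedAddCommGroup H] [InnerProductSpace ℂ H] [CompleteSpace H]

private lemma finset_cs {ι : Type*} (s : Finset ι) (a b : ι → ℝ) (ha : ∀ i, 0 ≤ a i)
    (hb : ∀ i, 0 ≤ b i) :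
    ∑ i ∈ s, a i * b i ≤ Real.sqrt (∑ i ∈ s, a i ^ 2) * Real.sqrt (∑ i ∈ s, b i ^ 2) := by
  have h := Finset.sum_mul_sq_le_sq_mul_sq s a b
  have h1 : 0 ≤ ∑ i ∈ s, a i * b i := Finset.sum_nonneg fun i _ => mul_nonneg (ha i) (hb i)
  have h2 : 0 ≤ ∑ i ∈ s, a i ^ 2 := Finset.sum_nonneg fun i _ => sq_nonneg _
  calc ∑ i ∈ s, a i * b i = Real.sqrt ((∑ i ∈ s, a i * b i) ^ 2) := (Real.sqrt_sq h1).symm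
    _ ≤ Real.sqrt ((∑ i ∈ s, a i ^ 2) * (∑ i ∈ s, b i ^ 2)) := Real.sqrt_le_sqrt h
    _ = _ := Real.sqrt_mul h2 _

private lemma tsum_cs {ι : Type*} (a b : ι → ℝ) (ha : ∀ i, 0 ≤ a i) (hb : ∀ i, 0 ≤ b i)
    (hsa : Summable fun i => a i ^ 2) (hsb : Summable fun i => b i ^ 2) :
    ∑' i, a i * b i ≤ Real.sqrt (∑' i, a i ^ 2) * Real.sqrt (∑' i, b i ^ 2) := by
  have hab : Summable fun i => a i * b i := by
    refine Summable.of_nonneg_of_le (fun i => mul_nonneg (ha i) (hb i)) (fun i => ?_) (hsa.add hsb)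
    nlinarith [sq_nonneg (a i - b i), mul_nonneg (ha i) (hb i)]
  refine Summable.tsum_le_of_sum_le hab fun s => ?_
  calc ∑ i ∈ s, a i * b i ≤ Real.sqrt (∑ i ∈ s, a i ^ 2) * Real.sqrt (∑ i ∈ s, b i ^ 2) :=
        finset_cs s a b ha hb
    _ ≤ Real.sqrt (∑' i, a i ^ 2) * Real.sqrt (∑' i, b i ^ 2) :=
        mul_le_mul (Real.sqrt_le_sqrt (Summable.sum_le_tsum s (fun i _ => sq_nonneg _) hsa))
          (Real.sqrt_le_sqrt (Summable.sum_le_tsum s (fun i _ => sq_nonneg _) hsb))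
          (Real.sqrt_nonneg _) (Real.sqrt_nonneg _)

private lemma synthesis_summable {ι : Type*} (u : ι → H) (B : ℝ) (hB0 : 0 ≤ B)
    (hB : ∀ (x : H) (s : Finset ι), ∑ i ∈ s, ‖⟪u i, x⟫‖ ^ 2 ≤ B * ‖x‖ ^ 2)
    (c : ι → ℂ) (hc : Summable fun i => ‖c i‖ ^ 2) :
    Summable fun i => c i • u i := by
  rw [summable_iff_vanishing_norm]
  intro ε hε
  obtain ⟨s, hs⟩ := summable_iff_vanishing_norm.1 hc (ε ^ 2 / (B + 1)) (by positivity)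
  refine ⟨s, fun t ht => ?_⟩
  set v := ∑ i ∈ t, c i • u i with hv
  have hvsum : (⟪v, v⟫ : ℂ) = ∑ i ∈ t, c i * ⟪v, u i⟫ := by
    conv_lhs => rw [hv]
    rw [inner_sum]
    exact Finset.sum_congr rfl fun i _ => inner_smul_right _ _ _
  have h1 : ‖v‖ ^ 2 = ‖(⟪v, v⟫ : ℂ)‖ := by
    rw [inner_self_eq_norm_sq_to_K (𝕜 := ℂ) v]
    simp [norm_pow]
  have h2 : ‖v‖ ^ 2 ≤ Real.sqrt (∑ i ∈ t, ‖c i‖ ^ 2) * Real.sqrt (∑ i ∈ t, ‖⟪u i, v⟫‖ ^ 2) := by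
    rw [h1, hvsum]
    calc ‖∑ i ∈ t, c i * ⟪v, u i⟫‖ ≤ ∑ i ∈ t, ‖c i * ⟪v, u i⟫‖ := norm_sum_le _ _
      _ = ∑ i ∈ t, ‖c i‖ * ‖⟪u i, v⟫‖ := by
          refine Finset.sum_congr rfl fun i _ => ?_
          rw [norm_mul, norm_inner_symm]
      _ ≤ _ := finset_cs t _ _ (fun i => norm_nonneg _) (fun i => norm_nonneg _)
  have h3 : Real.sqrt (∑ i ∈ t, ‖⟪u i, v⟫‖ ^ 2) ≤ Real.sqrt B * ‖v‖ := by
    calc Real.sqrt (∑ i ∈ t, ‖⟪u i, v⟫‖ ^ 2) ≤ Real.sqrt (B * ‖v‖ ^ 2) :=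
          Real.sqrt_le_sqrt (hB v t)
      _ = Real.sqrt B * ‖v‖ := by
          rw [Real.sqrt_mul hB0, Real.sqrt_sq (norm_nonneg _)]
  have hvle : ‖v‖ ≤ Real.sqrt (∑ i ∈ t, ‖c i‖ ^ 2) * Real.sqrt B := by
    rcases eq_or_lt_of_le (norm_nonneg v) with h0 | h0
    · rw [← h0]; positivity
    · have h4 : ‖v‖ * ‖v‖ ≤ (Real.sqrt (∑ i ∈ t, ‖c i‖ ^ 2) * Real.sqrt B) * ‖v‖ := by
        have : ‖v‖ ^ 2 ≤ Real.sqrt (∑ i ∈ t, ‖c i‖ ^ 2) * (Real.sqrt B * ‖v‖) :=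
          h2.trans (mul_le_mul_of_nonneg_left h3 (Real.sqrt_nonneg _))
        nlinarith [this]
      exact le_of_mul_le_mul_right h4 h0
  have hnn : 0 ≤ ∑ i ∈ t, ‖c i‖ ^ 2 := Finset.sum_nonneg fun i _ => sq_nonneg _
  have h5 : ∑ i ∈ t, ‖c i‖ ^ 2 < ε ^ 2 / (B + 1) := by
    have := hs t ht
    rwa [Real.norm_of_nonneg hnn] at this
  have h6 : (∑ i ∈ t, ‖c i‖ ^ 2) * B ≤ ε ^ 2 / (B + 1) * B :=
    mul_le_mul_of_nonneg_right h5.le hB0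
  have h7 : ε ^ 2 / (B + 1) * B < ε ^ 2 := by
    rw [div_mul_eq_mul_div, div_lt_iff₀ (by linarith)]
    nlinarith
  calc ‖v‖ ≤ Real.sqrt (∑ i ∈ t, ‖c i‖ ^ 2) * Real.sqrt B := hvle
    _ = Real.sqrt ((∑ i ∈ t, ‖c i‖ ^ 2) * B) := (Real.sqrt_mul hnn B).symm
    _ < ε := by
        have hlt : (∑ i ∈ t, ‖c i‖ ^ 2) * B < ε ^ 2 := lt_of_le_of_lt h6 h7
        have := Real.sqrt_lt_sqrt (by positivity) hlt
        rwa [Real.sqrt_sq hε.le] at this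

private lemma finset_subtype_bound {p : ℕ → Prop} (h : ℕ → ℝ) (C : ℝ)
    (hC : ∀ s : Finset ℕ, ∑ i ∈ s, h i ≤ C) (s : Finset {i // p i}) :
    ∑ i ∈ s, h ↑i ≤ C := by
  have : ∑ i ∈ s, h ↑i = ∑ j ∈ s.image Subtype.val, h j :=
    (Finset.sum_image (fun x _ y _ hxy => Subtype.val_injective hxy)).symm
  rw [this]; exact hC _


/-- The subfamily `{f i : i ∉ Λ}` is a frame for `H`: there are constants `0 < A, B` with
`A‖x‖² ≤ ∑_{i∉Λ} |⟨x, f i⟩|² ≤ B‖x‖²` for all `x`.  (The inner product `⟨x, y⟩` of the paper,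
linear in the first argument, is `⟪y, x⟫` in Mathlib's convention.) -/
def IsFrameOn (f : ℕ → H) (Λ : Set ℕ) : Prop :=
  ∃ A B : ℝ, 0 < A ∧ 0 < B ∧ ∀ x : H,
    A * ‖x‖ ^ 2 ≤ ∑' i : {i : ℕ // i ∉ Λ}, ‖⟪f i, x⟫‖ ^ 2 ∧
      ∑' i : {i : ℕ // i ∉ Λ}, ‖⟪f i, x⟫‖ ^ 2 ≤ B * ‖x‖ ^ 2

/-- `f` is a frame for `H`. -/
def IsFrame (f : ℕ → H) : Prop := IsFrameOn f (∅ : Set ℕ)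

theorem canonical_dual_subfamily_frame_iff_operator_bijective
    (f : ℕ → H) (hf : IsFrame f)
    (S : H ≃L[ℂ] H) (hS : ∀ x : H, S x = ∑' i : ℕ, ⟪f i, x⟫ • f i)
    (Λ : Set ℕ) (hΛ : Λ.Finite)
    (V : H →L[ℂ] H)
    (hV : ∀ x : H, V x = x - ∑' i : ↥Λ, ⟪f i, x⟫ • S.symm (f i)) :
    IsFrameOn (fun i => S.symm (f i)) Λ ↔ Function.Bijective V := by
  classical
  set g : ℕ → H := fun i => S.symm (f i) with hg
  unfold IsFrame IsFrameOn at hf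
  obtain ⟨A, B, hA, hB, hfr⟩ := hf
  -- the frame inequalities over all of ℕ
  have hframe : ∀ x : H, A * ‖x‖ ^ 2 ≤ ∑' i : ℕ, ‖⟪f i, x⟫‖ ^ 2 ∧
      ∑' i : ℕ, ‖⟪f i, x⟫‖ ^ 2 ≤ B * ‖x‖ ^ 2 := by
    intro x
    have e : ∑' i : {i : ℕ // i ∉ (∅ : Set ℕ)}, ‖⟪f ↑i, x⟫‖ ^ 2 = ∑' i : ℕ, ‖⟪f i, x⟫‖ ^ 2 :=
      (Equiv.subtypeUnivEquiv (fun i => Set.notMem_empty i)).tsum_eq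
        (fun i => ‖⟪f i, x⟫‖ ^ 2)
    rw [← e]; exact hfr x
  -- Bessel-type summability for `f`
  have hsum : ∀ x : H, Summable fun i : ℕ => ‖⟪f i, x⟫‖ ^ 2 := by
    intro x
    rcases eq_or_ne x 0 with rfl | hx
    · simpa [inner_zero_right] using summable_zero
    · by_contra h
      have h1 := (hframe x).1
      rw [tsum_eq_zero_of_not_summable h] at h1
      have hxpos : 0 < ‖x‖ := norm_pos_iff.mpr hx
      nlinarith [pow_pos hxpos 2]
  have hBfin : ∀ (x : H) (s : Finset ℕ), ∑ i ∈ s, ‖⟪f i, x⟫‖ ^ 2 ≤ B * ‖x‖ ^ 2 :=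
    fun x s => (Summable.sum_le_tsum s (fun i _ => sq_nonneg _) (hsum x)).trans (hframe x).2
  have hsynth : ∀ x : H, Summable fun i : ℕ => ⟪f i, x⟫ • f i := fun x =>
    synthesis_summable f B hB.le hBfin _ (hsum x)
  -- reproduction formula
  have hrep : ∀ x : H, x = ∑' i : ℕ, ⟪f i, x⟫ • g i := by
    intro x
    have h1 : x = S.symm (∑' i : ℕ, ⟪f i, x⟫ • f i) := by
      rw [← hS x, ContinuousLinearEquiv.symm_apply_apply]
    calc x = S.symm (∑' i : ℕ, ⟪f i, x⟫ • f i) := h1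
      _ = ∑' i : ℕ, S.symm (⟪f i, x⟫ • f i) := S.symm.map_tsum
      _ = ∑' i : ℕ, ⟪f i, x⟫ • g i := tsum_congr fun i => by rw [hg]; exact map_smul _ _ _
  -- `S` is self-adjoint
  have hSsym : ∀ x y : H, ⟪S x, y⟫ = ⟪x, S y⟫ := by
    intro x y
    have h1 : ⟪y, S x⟫ = ∑' i : ℕ, ⟪f i, x⟫ * ⟪y, f i⟫ := by
      rw [hS x, ← innerSL_apply_apply (𝕜 := ℂ), ContinuousLinearMap.map_tsum _ (hsynth x)]
      exact tsum_congr fun i => by simp [inner_smul_right]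
    have h2 : ⟪x, S y⟫ = ∑' i : ℕ, ⟪f i, y⟫ * ⟪x, f i⟫ := by
      rw [hS y, ← innerSL_apply_apply (𝕜 := ℂ), ContinuousLinearMap.map_tsum _ (hsynth y)]
      exact tsum_congr fun i => by simp [inner_smul_right]
    calc ⟪S x, y⟫ = (starRingEnd ℂ) ⟪y, S x⟫ := (inner_conj_symm _ _).symm
      _ = (starRingEnd ℂ) (∑' i : ℕ, ⟪f i, x⟫ * ⟪y, f i⟫) := by rw [h1]
      _ = ∑' i : ℕ, (starRingEnd ℂ) (⟪f i, x⟫ * ⟪y, f i⟫) := tsum_star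
      _ = ∑' i : ℕ, ⟪f i, y⟫ * ⟪x, f i⟫ := by
          refine tsum_congr fun i => ?_
          rw [map_mul, inner_conj_symm, inner_conj_symm]
          ring
      _ = ⟪x, S y⟫ := h2.symm
  have hg_inner : ∀ (i : ℕ) (x : H), ⟪g i, x⟫ = ⟪f i, S.symm x⟫ := by
    intro i x
    conv_lhs => rw [← S.apply_symm_apply x]
    rw [← hSsym (g i) (S.symm x)]
    congr 1
    exact S.apply_symm_apply (f i)
  -- Bessel bounds for the dual family `g`
  set CS : ℝ := ‖(S.symm : H →L[ℂ] H)‖ with hCS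
  have hCS0 : 0 ≤ CS := norm_nonneg _
  set Bs : ℝ := B * (CS + 1) ^ 2 with hBsdef
  have hBs : 0 < Bs := by positivity
  have hSsymm_le : ∀ x : H, ‖S.symm x‖ ≤ (CS + 1) * ‖x‖ := by
    intro x
    have h1 : ‖(S.symm : H →L[ℂ] H) x‖ ≤ CS * ‖x‖ := (S.symm : H →L[ℂ] H).le_opNorm x
    have h2 : ((S.symm : H →L[ℂ] H) x) = S.symm x := rfl
    rw [h2] at h1
    nlinarith [norm_nonneg x]
  have hgsum : ∀ x : H, Summable fun i : ℕ => ‖⟪g i, x⟫‖ ^ 2 := by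
    intro x
    simp only [hg_inner]
    exact hsum (S.symm x)
  have hgB : ∀ x : H, ∑' i : ℕ, ‖⟪g i, x⟫‖ ^ 2 ≤ Bs * ‖x‖ ^ 2 := by
    intro x
    have h1 : ∑' i : ℕ, ‖⟪g i, x⟫‖ ^ 2 = ∑' i : ℕ, ‖⟪f i, S.symm x⟫‖ ^ 2 :=
      tsum_congr fun i => by rw [hg_inner]
    have h2 := (hframe (S.symm x)).2
    have h3 := hSsymm_le x
    rw [h1]
    calc ∑' i : ℕ, ‖⟪f i, S.symm x⟫‖ ^ 2 ≤ B * ‖S.symm x‖ ^ 2 := h2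
      _ ≤ Bs * ‖x‖ ^ 2 := by
          have h4 : ‖S.symm x‖ ^ 2 ≤ ((CS + 1) * ‖x‖) ^ 2 :=
            pow_le_pow_left₀ (norm_nonneg _) h3 2
          rw [hBsdef]
          nlinarith [h4]
  have hgBfin : ∀ (x : H) (s : Finset ℕ), ∑ i ∈ s, ‖⟪g i, x⟫‖ ^ 2 ≤ Bs * ‖x‖ ^ 2 :=
    fun x s => (Summable.sum_le_tsum s (fun i _ => sq_nonneg _) (hgsum x)).trans (hgB x)
  -- the same facts for the subfamily indexed by `{i // i ∉ Λ}`
  have hgsumσ : ∀ x : H, Summable fun i : {i : ℕ // i ∉ Λ} => ‖⟪g ↑i, x⟫‖ ^ 2 := by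
    intro x
    exact (hgsum x).subtype Λᶜ
  have hgBfinσ : ∀ (x : H) (s : Finset {i : ℕ // i ∉ Λ}),
      ∑ i ∈ s, ‖⟪g ↑i, x⟫‖ ^ 2 ≤ Bs * ‖x‖ ^ 2 := fun x s =>
    finset_subtype_bound (fun i => ‖⟪g i, x⟫‖ ^ 2) _ (fun t => hgBfin x t) s
  have hQle : ∀ x : H, ∑' i : {i : ℕ // i ∉ Λ}, ‖⟪g ↑i, x⟫‖ ^ 2 ≤ Bs * ‖x‖ ^ 2 :=
    fun x => Summable.tsum_le_of_sum_le (hgsumσ x) (hgBfinσ x)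
  have hQnn : ∀ x : H, (0:ℝ) ≤ ∑' i : {i : ℕ // i ∉ Λ}, ‖⟪g ↑i, x⟫‖ ^ 2 :=
    fun x => tsum_nonneg fun i => sq_nonneg _
  -- `V` is the synthesis over the complement of `Λ`
  have hVsplit : ∀ x : H, V x = ∑' i : {i : ℕ // i ∉ Λ}, ⟪f ↑i, x⟫ • g ↑i := by
    intro x
    have hsumg : Summable fun i : ℕ => ⟪f i, x⟫ • g i :=
      synthesis_summable g Bs hBs.le hgBfin _ (hsum x)
    have split := Summable.tsum_add_tsum_compl (s := Λ) (f := fun i => ⟪f i, x⟫ • g i)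
      (hsumg.subtype _) (hsumg.subtype _)
    calc V x = x - ∑' i : ↥Λ, ⟪f ↑i, x⟫ • g ↑i := hV x
      _ = (∑' i : ℕ, ⟪f i, x⟫ • g i) - ∑' i : ↥Λ, ⟪f ↑i, x⟫ • g ↑i := by rw [← hrep x]
      _ = ∑' i : ↥(Λᶜ), ⟪f ↑i, x⟫ • g ↑i := sub_eq_of_eq_add' split.symm
  -- the operator `W = V ∘ S⁻¹`
  set W : H →L[ℂ] H := V.comp (S.symm : H →L[ℂ] H) with hWdef
  have hWapp : ∀ x : H, W x = V (S.symm x) := fun x => rfl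
  have hW : ∀ x : H, W x = ∑' i : {i : ℕ // i ∉ Λ}, ⟪g ↑i, x⟫ • g ↑i := by
    intro x
    rw [hWapp x, hVsplit (S.symm x)]
    exact tsum_congr fun i => by rw [← hg_inner]
  have hsynthσ : ∀ x : H, Summable fun i : {i : ℕ // i ∉ Λ} => ⟪g ↑i, x⟫ • g ↑i := fun x =>
    synthesis_summable (fun i : {i : ℕ // i ∉ Λ} => g ↑i) Bs hBs.le
      (fun y s => hgBfinσ y s) _ (hgsumσ x)
  have hWinner : ∀ x y : H, ⟪y, W x⟫ = ∑' i : {i : ℕ // i ∉ Λ}, ⟪g ↑i, x⟫ * ⟪y, g ↑i⟫ := by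
    intro x y
    rw [hW x, ← innerSL_apply_apply (𝕜 := ℂ), ContinuousLinearMap.map_tsum _ (hsynthσ x)]
    exact tsum_congr fun i => by simp [inner_smul_right]
  have hQW : ∀ x : H, ⟪x, W x⟫ = ((∑' i : {i : ℕ // i ∉ Λ}, ‖⟪g ↑i, x⟫‖ ^ 2 : ℝ) : ℂ) := by
    intro x
    rw [hWinner x x]
    have h1 : ∀ i : {i : ℕ // i ∉ Λ}, ⟪g ↑i, x⟫ * ⟪x, g ↑i⟫ = ((‖⟪g ↑i, x⟫‖ ^ 2 : ℝ) : ℂ) := by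
      intro i
      rw [← inner_conj_symm x (g ↑i), Complex.mul_conj, Complex.normSq_eq_norm_sq]
    rw [tsum_congr h1]
    exact (Complex.ofRealCLM.map_tsum (hgsumσ x)).symm
  unfold IsFrameOn
  constructor
  · -- the subfamily is a frame ⟹ V is bijective
    rintro ⟨A', B', hA', hB', hfr'⟩
    have hlow : ∀ x : H, A' * ‖x‖ ^ 2 ≤ ‖x‖ * ‖W x‖ := by
      intro x
      have h1 := (hfr' x).1
      have h2 : (∑' i : {i : ℕ // i ∉ Λ}, ‖⟪g ↑i, x⟫‖ ^ 2) = Complex.re ⟪x, W x⟫ := by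
        rw [hQW x, Complex.ofReal_re]
      calc A' * ‖x‖ ^ 2 ≤ ∑' i : {i : ℕ // i ∉ Λ}, ‖⟪g ↑i, x⟫‖ ^ 2 := h1
        _ = Complex.re ⟪x, W x⟫ := h2
        _ ≤ ‖(⟪x, W x⟫ : ℂ)‖ := by
            exact Complex.re_le_norm _
        _ ≤ ‖x‖ * ‖W x‖ := norm_inner_le_norm x (W x)
    have hbelow : ∀ x : H, A' * ‖x‖ ≤ ‖W x‖ := by
      intro x
      rcases eq_or_ne x 0 with rfl | hx
      · simp
      · have hxpos : 0 < ‖x‖ := norm_pos_iff.mpr hx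
        have h1 := hlow x
        rw [pow_two] at h1
        nlinarith
    have hanti : AntilipschitzWith (A'⁻¹).toNNReal W := by
      apply W.antilipschitz_of_bound
      intro x
      rw [Real.coe_toNNReal _ (by positivity)]
      have h1 := hbelow x
      calc ‖x‖ = A'⁻¹ * (A' * ‖x‖) := by field_simp
        _ ≤ A'⁻¹ * ‖W x‖ := mul_le_mul_of_nonneg_left h1 (by positivity)
    have hinj : Function.Injective W := hanti.injective
    have hclosed : IsClosed ((LinearMap.range (W : H →ₗ[ℂ] H) : Submodule ℂ H) : Set H) := by
      rw [LinearMap.coe_range]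
      exact hanti.isClosed_range W.uniformContinuous
    haveI : CompleteSpace (LinearMap.range (W : H →ₗ[ℂ] H) : Submodule ℂ H) := hclosed.completeSpace_coe
    have horth : (LinearMap.range (W : H →ₗ[ℂ] H) : Submodule ℂ H)ᗮ = ⊥ := by
      rw [Submodule.eq_bot_iff]
      intro y hy
      have h0 : ⟪W y, y⟫ = 0 :=
        (Submodule.mem_orthogonal _ y).1 hy (W y) (LinearMap.mem_range_self _ y)
      have h0' : (⟪y, W y⟫ : ℂ) = 0 := by
        rw [← inner_conj_symm, h0, map_zero]
      have hQ0 : (∑' i : {i : ℕ // i ∉ Λ}, ‖⟪g ↑i, y⟫‖ ^ 2) = 0 := by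
        have h2 := hQW y
        rw [h0'] at h2
        exact_mod_cast h2.symm
      have h3 := (hfr' y).1
      rw [hQ0] at h3
      by_contra hy0
      have hypos : 0 < ‖y‖ := norm_pos_iff.mpr hy0
      nlinarith [pow_pos hypos 2, h3]
    have hsurj : Function.Surjective W := by
      refine LinearMap.range_eq_top.mp ?_
      exact Submodule.orthogonal_eq_bot_iff.mp horth
    have hWbij : Function.Bijective W := ⟨hinj, hsurj⟩
    have hVW : ⇑V = ⇑W ∘ ⇑S := by
      funext x
      simp only [Function.comp_apply, hWapp, ContinuousLinearEquiv.symm_apply_apply]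
    rw [hVW]
    exact hWbij.comp S.bijective
  · -- V is bijective ⟹ the subfamily is a frame
    intro hVbij
    have hWbij : Function.Bijective W := by
      have h1 : ⇑W = ⇑V ∘ ⇑S.symm := rfl
      rw [h1]
      exact hVbij.comp S.symm.bijective
    set E := ContinuousLinearEquiv.ofBijective W (LinearMap.ker_eq_bot.mpr hWbij.1)
      (LinearMap.range_eq_top.mpr hWbij.2) with hE
    have hEW : ∀ x : H, W (E.symm x) = x := fun x =>
      ContinuousLinearEquiv.ofBijective_apply_symm_apply W _ _ x
    set C : ℝ := ‖(E.symm : H →L[ℂ] H)‖ with hC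
    have hC0 : 0 ≤ C := norm_nonneg _
    have hEle : ∀ x : H, ‖E.symm x‖ ≤ C * ‖x‖ := fun x => (E.symm : H →L[ℂ] H).le_opNorm x
    -- Cauchy–Schwarz for the quadratic form
    have hcs : ∀ x y : H, ‖(⟪x, W y⟫ : ℂ)‖ ≤
        Real.sqrt (∑' i : {i : ℕ // i ∉ Λ}, ‖⟪g ↑i, y⟫‖ ^ 2) *
          Real.sqrt (∑' i : {i : ℕ // i ∉ Λ}, ‖⟪g ↑i, x⟫‖ ^ 2) := by
      intro x y
      rw [hWinner y x]
      have hsummand : ∀ i : {i : ℕ // i ∉ Λ},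
          ‖⟪g ↑i, y⟫ * ⟪x, g ↑i⟫‖ = ‖⟪g ↑i, y⟫‖ * ‖⟪g ↑i, x⟫‖ := fun i => by
        rw [norm_mul, norm_inner_symm x]
      have hsumnorm : Summable fun i : {i : ℕ // i ∉ Λ} => ‖⟪g ↑i, y⟫ * ⟪x, g ↑i⟫‖ := by
        refine Summable.of_nonneg_of_le (fun i => norm_nonneg _) (fun i => ?_)
          ((hgsumσ y).add (hgsumσ x))
        rw [hsummand i]
        nlinarith [sq_nonneg (‖⟪g ↑i, y⟫‖ - ‖⟪g ↑i, x⟫‖), norm_nonneg (⟪g ↑i, y⟫ : ℂ),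
          norm_nonneg (⟪g ↑i, x⟫ : ℂ), mul_nonneg (norm_nonneg (⟪g ↑i, y⟫ : ℂ))
            (norm_nonneg (⟪g ↑i, x⟫ : ℂ))]
      calc ‖∑' i : {i : ℕ // i ∉ Λ}, ⟪g ↑i, y⟫ * ⟪x, g ↑i⟫‖
          ≤ ∑' i : {i : ℕ // i ∉ Λ}, ‖⟪g ↑i, y⟫ * ⟪x, g ↑i⟫‖ := norm_tsum_le_tsum_norm hsumnorm
        _ = ∑' i : {i : ℕ // i ∉ Λ}, ‖⟪g ↑i, y⟫‖ * ‖⟪g ↑i, x⟫‖ := tsum_congr hsummand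
        _ ≤ _ := tsum_cs _ _ (fun i => norm_nonneg _) (fun i => norm_nonneg _)
            (hgsumσ y) (hgsumσ x)
    refine ⟨(Bs * C ^ 2 + 1)⁻¹, Bs, by positivity, hBs, fun x => ⟨?_, hQle x⟩⟩
    rcases eq_or_ne x 0 with rfl | hx
    · simpa using hQnn 0
    · have hxpos : 0 < ‖x‖ := norm_pos_iff.mpr hx
      set Qx : ℝ := ∑' i : {i : ℕ // i ∉ Λ}, ‖⟪g ↑i, x⟫‖ ^ 2 with hQxdef
      have h1 : ‖x‖ ^ 2 ≤
          Real.sqrt (∑' i : {i : ℕ // i ∉ Λ}, ‖⟪g ↑i, E.symm x⟫‖ ^ 2) * Real.sqrt Qx := by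
        have h2 := hcs x (E.symm x)
        rw [hEW x] at h2
        have h3 : ‖(⟪x, x⟫ : ℂ)‖ = ‖x‖ ^ 2 := by
          rw [inner_self_eq_norm_sq_to_K (𝕜 := ℂ)]
          simp [norm_pow]
        rwa [h3] at h2
      have h4 : Real.sqrt (∑' i : {i : ℕ // i ∉ Λ}, ‖⟪g ↑i, E.symm x⟫‖ ^ 2) ≤
          Real.sqrt Bs * (C * ‖x‖) := by
        calc Real.sqrt (∑' i : {i : ℕ // i ∉ Λ}, ‖⟪g ↑i, E.symm x⟫‖ ^ 2)
            ≤ Real.sqrt (Bs * ‖E.symm x‖ ^ 2) := Real.sqrt_le_sqrt (hQle (E.symm x))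
          _ = Real.sqrt Bs * ‖E.symm x‖ := by
              rw [Real.sqrt_mul hBs.le, Real.sqrt_sq (norm_nonneg _)]
          _ ≤ Real.sqrt Bs * (C * ‖x‖) :=
              mul_le_mul_of_nonneg_left (hEle x) (Real.sqrt_nonneg _)
      have h5 : ‖x‖ ^ 2 ≤ Real.sqrt Bs * (C * ‖x‖) * Real.sqrt Qx :=
        h1.trans (mul_le_mul_of_nonneg_right h4 (Real.sqrt_nonneg _))
      have hq : Real.sqrt Qx ^ 2 = Qx := Real.sq_sqrt (hQnn x)
      have hbs : Real.sqrt Bs ^ 2 = Bs := Real.sq_sqrt hBs.le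
      have h6 : ‖x‖ * ‖x‖ ≤ (Real.sqrt Bs * C * Real.sqrt Qx) * ‖x‖ := by
        calc ‖x‖ * ‖x‖ = ‖x‖ ^ 2 := (sq ‖x‖).symm
          _ ≤ Real.sqrt Bs * (C * ‖x‖) * Real.sqrt Qx := h5
          _ = (Real.sqrt Bs * C * Real.sqrt Qx) * ‖x‖ := by ring
      have h7 : ‖x‖ ≤ Real.sqrt Bs * C * Real.sqrt Qx := le_of_mul_le_mul_right h6 hxpos
      have h8 : ‖x‖ ^ 2 ≤ Bs * C ^ 2 * Qx := by
        calc ‖x‖ ^ 2 ≤ (Real.sqrt Bs * C * Real.sqrt Qx) ^ 2 :=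
              pow_le_pow_left₀ (norm_nonneg x) h7 2
          _ = Bs * C ^ 2 * Qx := by rw [mul_pow, mul_pow, hq, hbs]
      have h9 : ‖x‖ ^ 2 ≤ (Bs * C ^ 2 + 1) * Qx := by nlinarith [hQnn x]
      calc (Bs * C ^ 2 + 1)⁻¹ * ‖x‖ ^ 2 ≤ (Bs * C ^ 2 + 1)⁻¹ * ((Bs * C ^ 2 + 1) * Qx) :=
            mul_le_mul_of_nonneg_left h9 (by positivity)
        _ = Qx := by field_simp
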